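/- Let K_1, …, K_r ⊆ ℝⁿ be closed convex sets with x̄ ∈ ∩_{l=1}^r K_l. Suppose that Σ_{l=1}^r v_l = 0 with v_l ∈ N_{K_l}(x̄) implies v_l = 0 for all l. Then the collection {K_l} satisfies the local metric inequality at x̄: there exist κ̄ > 0 and δ > 0 such that d(x, ∩_l K_l) ≤ κ̄ · max_{1≤l≤r} d(x, K_l) for all x ∈ B(x̄,δ). -/

import Mathlib

open RealInnerProductSpace

/-- The normal cone of a convex set `C` at `x`. -/
def normalCone {n : ℕ} (C : Set (EuclideanSpace ℝ (Fin n))) (x : EuclideanSpace ℝ (Fin n)) :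
    Set (EuclideanSpace ℝ (Fin n)) :=
  {v | ∀ y ∈ C, ⟪v, y - x⟫ ≤ 0}

/-!
Compactness turns the constraint qualification into a quantitative one,
`ε ∑ ‖v l‖ ≤ ‖∑ v l‖` for normals `v l` to `K l` at points near `x̄`. Applied to the normals
`y - P l y` given by the projections `P l` onto the `K l`, it says that the convex function
`F = ∑ d(·, K l)²`, whose gradient is `2 ∑ (y - P l y)`, satisfies `‖∇F‖ ≥ c √F` near `x̄`
(with `c = 2ε`). Minimizing `F` over the ball of radius `2 √F(x) / c` about `x` then halves
`√F`, and iterating gives a sequence converging geometrically to a point of `⋂ K l` within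
`4 √F(x) / c` of `x`.
-/

open Metric Filter Topology

theorem IsCompact.exists_pos_le_near_zeros {X : Type*} [TopologicalSpace X] {T : Set X}
    (hT : IsCompact T) {g h : X → ℝ} (hg : ContinuousOn g T) (hh : ContinuousOn h T)
    (hpos : ∀ t ∈ T, g t ≤ 0 → 0 < h t) : ∃ ε > 0, ∀ t ∈ T, g t < ε → ε ≤ h t := by
  have hmax : ∀ t ∈ T, 0 < max (h t) (g t) := fun t ht => by
    by_cases hgt : g t ≤ 0
    · exact lt_max_of_lt_left (hpos t ht hgt)
    · exact lt_max_of_lt_right (not_le.1 hgt)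
  obtain ⟨ε, hε, hle⟩ := hT.exists_forall_le' (hh.sup hg) hmax
  exact ⟨ε, hε, fun t ht hgt => (le_max_iff.1 (hle t ht)).resolve_right (not_le.2 hgt)⟩

theorem exists_le_zero_of_halving {X : Type*} [PseudoMetricSpace X] [CompleteSpace X]
    {f : X → ℝ} (hf : Continuous f) {β : ℝ} (hβ : 0 ≤ β) {x : X}
    (hstep : ∀ y, dist y x + 2 * β * f y ≤ 2 * β * f x →
      ∃ y', dist y y' ≤ β * f y ∧ f y' ≤ f y / 2) :
    ∃ z, f z ≤ 0 ∧ dist x z ≤ 2 * β * f x := by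
  choose! s hs using hstep
  set u : ℕ → X := fun n => s^[n] x
  have hsucc (n : ℕ) : u (n + 1) = s (u n) := Function.iterate_succ_apply' s n x
  have hu (n : ℕ) : dist (u n) x + 2 * β * f (u n) ≤ 2 * β * f x ∧
      f (u n) ≤ (1 / 2) ^ n * f x := by
    induction n with
    | zero => simp [u]
    | succ n ih =>
      obtain ⟨hdist, hhalf⟩ := hs (u n) ih.1
      rw [hsucc]
      refine ⟨?_, by rw [pow_succ]; linarith [ih.2]⟩
      nlinarith [dist_triangle_left (s (u n)) x (u n), mul_le_mul_of_nonneg_left hhalf hβ]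
  have hgeom (n : ℕ) : dist (u n) (u (n + 1)) ≤ 2 * β * f x / 2 / 2 ^ n := by
    rw [hsucc]
    calc dist (u n) (s (u n)) ≤ β * f (u n) := (hs (u n) (hu n).1).1
      _ ≤ β * ((1 / 2) ^ n * f x) := mul_le_mul_of_nonneg_left (hu n).2 hβ
      _ = 2 * β * f x / 2 / 2 ^ n := by rw [one_div_pow]; ring
  obtain ⟨z, hz⟩ := cauchySeq_tendsto_of_complete (cauchySeq_of_le_geometric_two hgeom)
  have hlim : Tendsto (fun n => (1 / 2 : ℝ) ^ n * f x) atTop (𝓝 0) := by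
    simpa using (tendsto_pow_atTop_nhds_zero_of_lt_one (by norm_num) (by norm_num :
      (1 / 2 : ℝ) < 1)).mul_const (f x)
  exact ⟨z, le_of_tendsto_of_tendsto' ((hf.tendsto z).comp hz) hlim fun n => (hu n).2,
    dist_le_of_le_geometric_two_of_tendsto₀ hgeom hz⟩

theorem Real.sqrt_sum_sq_le_sqrt_card_mul_iSup {ι : Type*} [Fintype ι] {a : ι → ℝ}
    (ha : ∀ i, 0 ≤ a i) : √(∑ i, a i ^ 2) ≤ √(Fintype.card ι) * ⨆ i, a i := by
  have hM : ∀ i, a i ≤ ⨆ i, a i := le_ciSup (Set.finite_range a).bddAbove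
  rw [← Real.sqrt_sq (Real.iSup_nonneg ha), ← Real.sqrt_mul (Nat.cast_nonneg _)]
  refine Real.sqrt_le_sqrt ?_
  calc ∑ i, a i ^ 2 ≤ ∑ _i : ι, (⨆ i, a i) ^ 2 :=
        Finset.sum_le_sum fun i _ => pow_le_pow_left₀ (ha i) (hM i) 2
    _ = Fintype.card ι * (⨆ i, a i) ^ 2 := by simp

theorem mem_iInter_of_sum_infDist_sq_eq_zero {α ι : Type*} [PseudoMetricSpace α] [Fintype ι]
    {K : ι → Set α} (hK : ∀ l, IsClosed (K l)) (hne : ∀ l, (K l).Nonempty) {z : α}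
    (hz : ∑ l, infDist z (K l) ^ 2 = 0) : z ∈ ⋂ l, K l :=
  Set.mem_iInter.2 fun l => ((hK l).mem_iff_infDist_zero (hne l)).2 <|
    (pow_eq_zero_iff two_ne_zero).1 <|
      (Finset.sum_eq_zero_iff_of_nonneg fun _ _ => sq_nonneg _).1 hz l (Finset.mem_univ l)

section Projection

variable {E : Type*} [NormedAddCommGroup E] [InnerProductSpace ℝ E]

/-- The variational form of "`p` is the point of `K` nearest to `y`", equivalent to it for
convex `K`. -/
def IsProj (K : Set E) (y p : E) : Prop :=
  p ∈ K ∧ ∀ w ∈ K, ⟪y - p, w - p⟫ ≤ 0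

theorem exists_isProj {K : Set E} (hne : K.Nonempty) (hc : IsComplete K) (hcv : Convex ℝ K)
    (y : E) : ∃ p, IsProj K y p := by
  obtain ⟨p, hp, hmin⟩ := exists_norm_eq_iInf_of_complete_convex hne hc hcv y
  exact ⟨p, hp, (norm_eq_iInf_iff_real_inner_le_zero hcv hp).1 hmin⟩

variable {K : Set E} {y p : E}

theorem IsProj.norm_sub_eq_infDist (h : IsProj K y p) : ‖y - p‖ = infDist y K := by
  refine le_antisymm ((le_infDist ⟨p, h.1⟩).2 fun w hw => ?_)
    (by simpa [dist_eq_norm] using infDist_le_dist_of_mem (x := y) h.1)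
  have hsq : ‖y - w‖ ^ 2 = ‖y - p‖ ^ 2 - 2 * ⟪y - p, w - p⟫ + ‖w - p‖ ^ 2 := by
    rw [← norm_sub_sq_real, sub_sub_sub_cancel_right]
  rw [dist_eq_norm, ← pow_le_pow_iff_left₀ (norm_nonneg _) (norm_nonneg _) two_ne_zero]
  nlinarith [h.2 w hw, sq_nonneg ‖w - p‖]

theorem IsProj.infDist_add_sq_le (h : IsProj K y p) (w : E) :
    infDist (y + w) K ^ 2 ≤ infDist y K ^ 2 + 2 * ⟪y - p, w⟫ + ‖w‖ ^ 2 := by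
  rw [← h.norm_sub_eq_infDist, ← norm_add_sq_real]
  have hle := infDist_le_dist_of_mem (x := y + w) h.1
  rw [dist_eq_norm, show y + w - p = y - p + w by abel] at hle
  exact pow_le_pow_left₀ infDist_nonneg hle 2

theorem IsProj.infDist_sq_add_le {q w : E} (h : IsProj K y p) (hq : IsProj K (y + w) q) :
    infDist y K ^ 2 + 2 * ⟪y - p, w⟫ ≤ infDist (y + w) K ^ 2 := by
  rw [← h.norm_sub_eq_infDist, ← hq.norm_sub_eq_infDist,
    show y + w - q = y - p + (w - (q - p)) by abel, norm_add_sq_real, inner_sub_right]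
  nlinarith [h.2 q hq.1, sq_nonneg ‖w - (q - p)‖]

end Projection

section SumOfSquaredDistances

variable {E : Type*} [NormedAddCommGroup E] [InnerProductSpace ℝ E]

theorem hasGradientAt_of_squeeze [CompleteSpace E] {f : E → ℝ} {g x : E} {C : ℝ}
    (hlow : ∀ w, f x + ⟪g, w⟫ ≤ f (x + w))
    (hup : ∀ w, f (x + w) ≤ f x + ⟪g, w⟫ + C * ‖w‖ ^ 2) : HasGradientAt f g x := by
  rw [hasGradientAt_iff_isLittleO_nhds_zero]
  refine (Asymptotics.IsBigO.of_bound C (Eventually.of_forall fun w => ?_)).trans_isLittleO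
    (Asymptotics.isLittleO_norm_pow_id one_lt_two)
  rw [Real.norm_eq_abs, norm_pow, norm_norm, abs_le]
  constructor <;> linarith [hlow w, hup w]

variable {ι : Type*} [Fintype ι] {K : ι → Set E} {P : ι → E → E}

theorem inner_two_smul_sum_sub (y w : E) :
    ⟪(2 : ℝ) • ∑ l, (y - P l y), w⟫ = ∑ l, 2 * ⟪y - P l y, w⟫ := by
  rw [real_inner_smul_left, sum_inner, Finset.mul_sum]

variable (hP : ∀ l y, IsProj (K l) y (P l y))
include hP

theorem sum_infDist_sq_add_inner_le (y w : E) :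
    ∑ l, infDist y (K l) ^ 2 + ⟪(2 : ℝ) • ∑ l, (y - P l y), w⟫ ≤
      ∑ l, infDist (y + w) (K l) ^ 2 := by
  rw [inner_two_smul_sum_sub, ← Finset.sum_add_distrib]
  exact Finset.sum_le_sum fun l _ => (hP l y).infDist_sq_add_le (hP l (y + w))

theorem hasGradientAt_sum_infDist_sq [CompleteSpace E] (y : E) :
    HasGradientAt (fun x => ∑ l, infDist x (K l) ^ 2) ((2 : ℝ) • ∑ l, (y - P l y)) y := by
  refine hasGradientAt_of_squeeze (sum_infDist_sq_add_inner_le hP y) (C := Fintype.card ι)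
    fun w => ?_
  calc ∑ l, infDist (y + w) (K l) ^ 2
      ≤ ∑ l, (infDist y (K l) ^ 2 + 2 * ⟪y - P l y, w⟫ + ‖w‖ ^ 2) :=
        Finset.sum_le_sum fun l _ => (hP l y).infDist_add_sq_le w
    _ = _ := by
        rw [inner_two_smul_sum_sub]
        simp only [Finset.sum_add_distrib, Finset.sum_const, Finset.card_univ, nsmul_eq_mul]

end SumOfSquaredDistances

section Descent

variable {E : Type*} [NormedAddCommGroup E] [InnerProductSpace ℝ E]

theorem IsMinOn.inner_sub_nonneg_of_hasGradientAt [CompleteSpace E] {F : E → ℝ}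
    {s : Set E} {g y z : E} (hmin : IsMinOn F s y) (hs : Convex ℝ s) (hy : y ∈ s) (hz : z ∈ s)
    (hF : HasGradientAt F g y) : 0 ≤ ⟪g, z - y⟫ :=
  hmin.localize.hasFDerivWithinAt_nonneg
    (hasGradientAt_iff_hasFDerivAt.1 hF).hasFDerivWithinAt
    (sub_mem_posTangentConeAt_of_segment_subset (hs.segment_subset hy hz))

theorem continuous_of_forall_hasGradientAt [CompleteSpace E] {F : E → ℝ} {G : E → E}
    (hF : ∀ y, HasGradientAt F (G y) y) : Continuous F :=
  continuous_iff_continuousAt.2 fun y => (hF y).differentiableAt.continuousAt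

variable [ProperSpace E] {F : E → ℝ} {G : E → E} (hF : ∀ y, HasGradientAt F (G y) y)
  (hconv : ∀ y w, F y + ⟪G y, w⟫ ≤ F (y + w))
include hF hconv

theorem exists_mem_closedBall_add_mul_norm_le (x₀ : E) {ρ : ℝ} (hρ : 0 ≤ ρ) :
    ∃ y ∈ closedBall x₀ ρ, F y + ρ * ‖G y‖ ≤ F x₀ := by
  obtain ⟨y, hy, hmin⟩ := (isCompact_closedBall x₀ ρ).exists_isMinOn
    (nonempty_closedBall.2 hρ) (continuous_of_forall_hasGradientAt hF).continuousOn
  refine ⟨y, hy, ?_⟩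
  -- test the first-order condition at `y` against the point of the ball farthest along `-G y`
  set u := ‖G y‖⁻¹ • G y
  have hu : ‖u‖ ≤ 1 := by
    rw [norm_smul, norm_inv, norm_norm]
    exact inv_mul_le_one_of_le₀ le_rfl (norm_nonneg _)
  have hGu : ⟪G y, u⟫ = ‖G y‖ := by
    rw [real_inner_smul_right, real_inner_self_eq_norm_sq, sq, ← mul_assoc, inv_mul_mul_self]
  have hz : x₀ - ρ • u ∈ closedBall x₀ ρ := by
    rw [mem_closedBall, dist_eq_norm, sub_sub_cancel_left, norm_neg, norm_smul,
      Real.norm_of_nonneg hρ]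
    exact mul_le_of_le_one_right hρ hu
  have hfirst := hmin.inner_sub_nonneg_of_hasGradientAt (convex_closedBall x₀ ρ) hy hz (hF y)
  rw [sub_right_comm, inner_sub_right, real_inner_smul_right, hGu] at hfirst
  have hdesc := hconv y (x₀ - y)
  rw [add_sub_cancel] at hdesc
  linarith

theorem exists_dist_le_sqrt_le_half (hF0 : ∀ y, 0 ≤ F y) {U : Set E} {c : ℝ} (hc : 0 < c)
    (hgrad : ∀ y ∈ U, c * √(F y) ≤ ‖G y‖) {x₀ : E}
    (hball : closedBall x₀ (2 / c * √(F x₀)) ⊆ U) :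
    ∃ y, dist x₀ y ≤ 2 / c * √(F x₀) ∧ √(F y) ≤ √(F x₀) / 2 := by
  obtain ⟨y, hy, hdesc⟩ := exists_mem_closedBall_add_mul_norm_le hF hconv x₀
    (by positivity : 0 ≤ 2 / c * √(F x₀))
  refine ⟨y, by rwa [dist_comm, ← mem_closedBall], ?_⟩
  have hG := mul_le_mul_of_nonneg_left (hgrad y (hball hy))
    (by positivity : 0 ≤ 2 / c * √(F x₀))
  -- with `a = √(F y)` and `b = √(F x₀)`, the descent reads `a² + 2ab ≤ b²`, forcing `a ≤ b / 2`
  have hc' : 2 / c * √(F x₀) * (c * √(F y)) = 2 * √(F x₀) * √(F y) := by field_simp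
  nlinarith [Real.sq_sqrt (hF0 y), Real.sq_sqrt (hF0 x₀), Real.sqrt_nonneg (F y),
    Real.sqrt_nonneg (F x₀)]

theorem eventually_exists_eq_zero_dist_le (hF0 : ∀ y, 0 ≤ F y) {xbar : E}
    (hxbar : F xbar = 0) {c R : ℝ} (hc : 0 < c) (hR : 0 < R)
    (hgrad : ∀ y ∈ closedBall xbar R, c * √(F y) ≤ ‖G y‖) :
    ∀ᶠ x in 𝓝 xbar, ∃ z, F z = 0 ∧ dist x z ≤ 4 / c * √(F x) := by
  have hcont := continuous_of_forall_hasGradientAt hF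
  have hnear : ∀ᶠ x in 𝓝 xbar, dist x xbar + 4 / c * √(F x) < R :=
    ContinuousAt.eventually_lt (by fun_prop) continuousAt_const (by simpa [hxbar] using hR)
  filter_upwards [hnear] with x hx
  obtain ⟨z, hz, hxz⟩ := exists_le_zero_of_halving (f := fun y => √(F y)) (by fun_prop)
    (by positivity : 0 ≤ 2 / c) (x := x) fun y hy =>
      exists_dist_le_sqrt_le_half hF hconv hF0 hc hgrad fun w hw => by
        have := mem_closedBall.1 hw
        rw [mem_closedBall]
        have hA : 0 ≤ 2 / c * √(F y) := by positivity
        linear_combination dist_triangle4 w y x xbar + this + hy + hx.le + hA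
  refine ⟨z, ?_, hxz.trans_eq (by ring)⟩
  exact le_antisymm (Real.sqrt_eq_zero'.1 (le_antisymm hz (Real.sqrt_nonneg _))) (hF0 z)

end Descent

section NormalCone

variable {n : ℕ} {ι : Type*} {K : ι → Set (EuclideanSpace ℝ (Fin n))}

theorem smul_mem_normalCone {C : Set (EuclideanSpace ℝ (Fin n))}
    {x v : EuclideanSpace ℝ (Fin n)} (hv : v ∈ normalCone C x) {t : ℝ} (ht : 0 ≤ t) :
    t • v ∈ normalCone C x := fun y hy => by
  rw [real_inner_smul_left]
  exact mul_nonpos_of_nonneg_of_nonpos ht (hv y hy)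

theorem isClosed_setOf_forall_mem_normalCone :
    IsClosed {q : (ι → EuclideanSpace ℝ (Fin n)) × (ι → EuclideanSpace ℝ (Fin n)) |
      ∀ l, q.2 l ∈ normalCone (K l) (q.1 l)} := by
  have : {q : (ι → EuclideanSpace ℝ (Fin n)) × (ι → EuclideanSpace ℝ (Fin n)) |
      ∀ l, q.2 l ∈ normalCone (K l) (q.1 l)} =
      ⋂ l, ⋂ z ∈ K l, {q | ⟪q.2 l, z - q.1 l⟫ ≤ 0} := by
    ext; simp [normalCone]
  rw [this]
  exact isClosed_iInter fun l => isClosed_biInter fun z _ =>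
    isClosed_le (by fun_prop) continuous_const

variable [Fintype ι] {xbar : EuclideanSpace ℝ (Fin n)}

theorem exists_pos_mul_sum_norm_le_norm_sum
    (hCQ : ∀ v : ι → EuclideanSpace ℝ (Fin n),
      (∀ l, v l ∈ normalCone (K l) xbar) → ∑ l, v l = 0 → ∀ l, v l = 0) :
    ∃ ε > 0, ∀ p v : ι → EuclideanSpace ℝ (Fin n), dist p (fun _ => xbar) < ε →
      (∀ l, v l ∈ normalCone (K l) (p l)) → ε * ∑ l, ‖v l‖ ≤ ‖∑ l, v l‖ := by
  -- pairs (base points, unit normals); on the slice `p = xbar`, `hCQ` makes `‖∑ l, v l‖` positive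
  set T := {q : (ι → EuclideanSpace ℝ (Fin n)) × (ι → EuclideanSpace ℝ (Fin n)) |
    ∀ l, q.2 l ∈ normalCone (K l) (q.1 l)} ∩
    {q | ∑ l, ‖q.2 l‖ = 1} ∩ {q | dist q.1 (fun _ => xbar) ≤ 1}
  have hT : IsCompact T := by
    refine (isCompact_closedBall ((fun _ => xbar, 0) :
      (ι → EuclideanSpace ℝ (Fin n)) × (ι → EuclideanSpace ℝ (Fin n))) 1).of_isClosed_subset
      ((isClosed_setOf_forall_mem_normalCone.inter
        (isClosed_eq (by fun_prop) continuous_const)).inter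
          (isClosed_le (by fun_prop) continuous_const)) ?_
    rintro q ⟨⟨-, hsum⟩, hdist⟩
    rw [mem_closedBall, Prod.dist_eq, max_le_iff, dist_zero_right]
    refine ⟨hdist, (pi_norm_le_iff_of_nonneg zero_le_one).2 fun l => ?_⟩
    exact (Finset.single_le_sum (fun i _ => norm_nonneg (q.2 i)) (Finset.mem_univ l)).trans_eq
      hsum
  obtain ⟨ε, hε, hle⟩ := hT.exists_pos_le_near_zeros
    (g := fun q => dist q.1 (fun _ => xbar)) (h := fun q => ‖∑ l, q.2 l‖)
    (by fun_prop) (by fun_prop) <| by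
      rintro ⟨p, v⟩ ⟨⟨hv, hsum⟩, -⟩ hp
      obtain rfl : p = fun _ => xbar := dist_le_zero.1 hp
      refine norm_pos_iff.2 fun h0 => ?_
      simp [hCQ v hv h0] at hsum
  refine ⟨min ε 1, by positivity, fun p v hp hv => ?_⟩
  rcases (Finset.sum_nonneg fun l _ => norm_nonneg (v l)).eq_or_lt with hs | hs
  · rw [← hs, mul_zero]
    exact norm_nonneg _
  set s := ∑ l, ‖v l‖
  have hnorm : ∑ l, ‖s⁻¹ • v l‖ = 1 := by
    simp only [norm_smul, norm_inv, Real.norm_of_nonneg hs.le, ← Finset.mul_sum]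
    exact inv_mul_cancel₀ hs.ne'
  have := hle (p, s⁻¹ • v) ⟨⟨fun l => smul_mem_normalCone (hv l) (by positivity), hnorm⟩,
    (hp.trans_le (min_le_right _ _)).le⟩ (hp.trans_le (min_le_left _ _))
  simp only [Pi.smul_apply, ← Finset.smul_sum, norm_smul, norm_inv,
    Real.norm_of_nonneg hs.le] at this
  calc min ε 1 * s ≤ s * ε := by rw [mul_comm]; gcongr; exact min_le_left _ _
    _ ≤ ‖∑ l, v l‖ := (le_inv_mul_iff₀ hs).1 this

theorem two_mul_mul_sqrt_sum_infDist_sq_le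
    {P : ι → EuclideanSpace ℝ (Fin n) → EuclideanSpace ℝ (Fin n)}
    (hP : ∀ l y, IsProj (K l) y (P l y)) (hxbar : ∀ l, xbar ∈ K l) {ε : ℝ} (hε : 0 < ε)
    (hquant : ∀ p v : ι → EuclideanSpace ℝ (Fin n), dist p (fun _ => xbar) < ε →
      (∀ l, v l ∈ normalCone (K l) (p l)) → ε * ∑ l, ‖v l‖ ≤ ‖∑ l, v l‖)
    {y : EuclideanSpace ℝ (Fin n)} (hy : y ∈ closedBall xbar (ε / 3)) :
    2 * ε * √(∑ l, infDist y (K l) ^ 2) ≤ ‖(2 : ℝ) • ∑ l, (y - P l y)‖ := by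
  have hd (l : ι) : ‖y - P l y‖ = infDist y (K l) := (hP l y).norm_sub_eq_infDist
  have hp : dist (fun l => P l y) (fun _ => xbar) < ε := (dist_pi_lt_iff hε).2 fun l => by
    rw [mem_closedBall] at hy
    linarith [infDist_le_dist_of_mem (x := y) (hxbar l), dist_triangle_left (P l y) xbar y,
      dist_eq_norm y (P l y), hd l]
  have hsum := hquant _ (fun l => y - P l y) hp fun l => (hP l y).2
  simp only [hd] at hsum
  have hsqrt : √(∑ l, infDist y (K l) ^ 2) ≤ ∑ l, infDist y (K l) :=
    (Real.sqrt_le_left (Finset.sum_nonneg fun l _ => infDist_nonneg)).2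
      (Finset.sum_sq_le_sq_sum_of_nonneg fun l _ => infDist_nonneg)
  rw [norm_smul, Real.norm_two, mul_assoc]
  gcongr
  exact (mul_le_mul_of_nonneg_left hsqrt hε.le).trans hsum

end NormalCone

/-- The constraint qualification implies the local metric inequality (linear
regularity) at `x̄`. -/
theorem CQ_implies_local_metric_inequality
    {n r : ℕ} (K : Fin r → Set (EuclideanSpace ℝ (Fin n)))
    (hclosed : ∀ l, IsClosed (K l)) (hconv : ∀ l, Convex ℝ (K l))
    (xbar : EuclideanSpace ℝ (Fin n)) (hxbar : xbar ∈ ⋂ l, K l)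
    (hCQ : ∀ v : Fin r → EuclideanSpace ℝ (Fin n),
      (∀ l, v l ∈ normalCone (K l) xbar) → ∑ l, v l = 0 → ∀ l, v l = 0) :
    ∃ κ > (0:ℝ), ∃ δ > (0:ℝ), ∀ x ∈ Metric.closedBall xbar δ,
      Metric.infDist x (⋂ l, K l) ≤ κ * ⨆ l, Metric.infDist x (K l) := by
  have hxK : ∀ l, xbar ∈ K l := Set.mem_iInter.1 hxbar
  obtain ⟨ε, hε, hquant⟩ := exists_pos_mul_sum_norm_le_norm_sum hCQ
  choose P hP using fun l y => exists_isProj ⟨xbar, hxK l⟩ (hclosed l).isComplete (hconv l) y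
  obtain ⟨δ, hδ, hnear⟩ := nhds_basis_closedBall.eventually_iff.1 <|
    eventually_exists_eq_zero_dist_le (hasGradientAt_sum_infDist_sq hP)
      (sum_infDist_sq_add_inner_le hP) (fun y => by positivity)
      (by simp [infDist_zero_of_mem, hxK]) (by positivity : 0 < 2 * ε)
      (by positivity : 0 < ε / 3) fun y hy =>
        two_mul_mul_sqrt_sum_infDist_sq_le hP hxK hε hquant hy
  refine ⟨2 / ε * √r + 1, by positivity, δ, hδ, fun x hx => ?_⟩
  obtain ⟨z, hz, hxz⟩ := hnear hx
  have hM : 0 ≤ ⨆ l, infDist x (K l) := Real.iSup_nonneg fun l => infDist_nonneg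
  calc infDist x (⋂ l, K l)
      ≤ dist x z := infDist_le_dist_of_mem
        (mem_iInter_of_sum_infDist_sq_eq_zero hclosed (fun l => ⟨xbar, hxK l⟩) hz)
    _ ≤ 2 / ε * √(∑ l, infDist x (K l) ^ 2) := hxz.trans_eq (by ring)
    _ ≤ 2 / ε * (√r * ⨆ l, infDist x (K l)) := by
        gcongr
        simpa using Real.sqrt_sum_sq_le_sqrt_card_mul_iSup fun l =>
          infDist_nonneg (x := x) (s := K l)
    _ ≤ (2 / ε * √r + 1) * ⨆ l, infDist x (K l) := by nlinarith
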